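/- Let k be a field, M a finite-dimensional k-vector space, and Φ a k-linear automorphism of M ⊗ M satisfying the pentagon equation. For ω ∈ End(M)* set λ(ω) = (ω ⊗ id)(Φ), where Φ is regarded as an element of End(M) ⊗ End(M). Then: (a) for every ω ∈ End(M)* with λ(ω) = 0 one also has (ω ⊗ id)(Φ⁻¹) = 0 (so S(λ(ω)) := (ω ⊗ id)(Φ⁻¹) is a well-defined map on the image of λ); (b) with c : End(M) ⊗ End(M) → End(M) the composition map a ⊗ b ↦ a ∘ b, for every ω ∈ End(M)* one has c((ω ⊗ id ⊗ id)(Φ_{12} ∘ Φ_{13}⁻¹)) = ω(id_M) · id_M and c((ω ⊗ id ⊗ id)(Φ_{12}⁻¹ ∘ Φ_{13})) = ω(id_M) · id_M (these are the two antipode identities for S). -/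

import Mathlib

open TensorProduct

noncomputable section

variable {k : Type*} [Field k]

/-- Apply `G` to tensor factors 1 and 2 of a triple tensor product. -/
def m12 {A B C P Q : Type*}
    [AddCommGroup A] [AddCommGroup B] [AddCommGroup C] [AddCommGroup P] [AddCommGroup Q]
    [Module k A] [Module k B] [Module k C] [Module k P] [Module k Q]
    (G : A ⊗[k] B →ₗ[k] P ⊗[k] Q) :
    A ⊗[k] (B ⊗[k] C) →ₗ[k] P ⊗[k] (Q ⊗[k] C) :=
  (TensorProduct.assoc k P Q C).toLinearMap ∘ₗ G.rTensor C ∘ₗ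
    (TensorProduct.assoc k A B C).symm.toLinearMap

/-- Apply `G` to tensor factors 2 and 3 of a triple tensor product. -/
def m23 {A B C Q R : Type*}
    [AddCommGroup A] [AddCommGroup B] [AddCommGroup C] [AddCommGroup Q] [AddCommGroup R]
    [Module k A] [Module k B] [Module k C] [Module k Q] [Module k R]
    (G : B ⊗[k] C →ₗ[k] Q ⊗[k] R) :
    A ⊗[k] (B ⊗[k] C) →ₗ[k] A ⊗[k] (Q ⊗[k] R) :=
  G.lTensor A

/-- Apply `G` to tensor factors 1 and 3 of a triple tensor product. -/
def m13 {A B C P R : Type*}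
    [AddCommGroup A] [AddCommGroup B] [AddCommGroup C] [AddCommGroup P] [AddCommGroup R]
    [Module k A] [Module k B] [Module k C] [Module k P] [Module k R]
    (G : A ⊗[k] C →ₗ[k] P ⊗[k] R) :
    A ⊗[k] (B ⊗[k] C) →ₗ[k] P ⊗[k] (B ⊗[k] R) :=
  ((TensorProduct.comm k R B).toLinearMap.lTensor P) ∘ₗ
    (TensorProduct.assoc k P R B).toLinearMap ∘ₗ G.rTensor B ∘ₗ
    (TensorProduct.assoc k A C B).symm.toLinearMap ∘ₗ
    ((TensorProduct.comm k B C).toLinearMap.lTensor A)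

/-- The modified pentagon equation for a pair `(F, Φ)`:
`F₁₂ ∘ F₁₃ ∘ Φ₂₃ = F₂₃ ∘ F₁₂` as maps `V ⊗ M ⊗ M → V ⊗ V ⊗ V`. -/
def MPE {V M : Type*} [AddCommGroup V] [AddCommGroup M] [Module k V] [Module k M]
    (F : V ⊗[k] M →ₗ[k] V ⊗[k] V) (Φ : M ⊗[k] M →ₗ[k] M ⊗[k] M) : Prop :=
  m12 F ∘ₗ m13 F ∘ₗ m23 Φ = m23 F ∘ₗ m12 F

/-- The pentagon equation: `Φ₁₂ ∘ Φ₁₃ ∘ Φ₂₃ = Φ₂₃ ∘ Φ₁₂` on `M ⊗ M ⊗ M`. -/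
def PE {M : Type*} [AddCommGroup M] [Module k M]
    (Φ : M ⊗[k] M →ₗ[k] M ⊗[k] M) : Prop :=
  m12 Φ ∘ₗ m13 Φ ∘ₗ m23 Φ = m23 Φ ∘ₗ m12 Φ

section PentagonEnd

variable {M : Type*} [AddCommGroup M] [Module k M] [FiniteDimensional k M]

/-- The canonical identification `End(M) ⊗ End(M) ≃ End(M ⊗ M)`. -/
noncomputable def e2 (M : Type*) [AddCommGroup M] [Module k M] [FiniteDimensional k M] :
    (Module.End k M) ⊗[k] (Module.End k M) ≃ₗ[k] Module.End k (M ⊗[k] M) :=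
  homTensorHomEquiv k M M M M

/-- The canonical identification `End(M) ⊗ (End(M) ⊗ End(M)) ≃ End(M ⊗ (M ⊗ M))`. -/
noncomputable def e3 (M : Type*) [AddCommGroup M] [Module k M] [FiniteDimensional k M] :
    (Module.End k M) ⊗[k] ((Module.End k M) ⊗[k] (Module.End k M)) ≃ₗ[k]
      Module.End k (M ⊗[k] (M ⊗[k] M)) :=
  TensorProduct.congr (LinearEquiv.refl k (Module.End k M)) (e2 M) ≪≫ₗ
    homTensorHomEquiv k M (M ⊗[k] M) M (M ⊗[k] M)

variable (Φ : M ⊗[k] M ≃ₗ[k] M ⊗[k] M)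

/-- `λ(ω) = (ω ⊗ id)(Φ)`, where `Φ` is regarded as an element of `End(M) ⊗ End(M)`. -/
noncomputable def lam (ω : Module.Dual k (Module.End k M)) : Module.End k M :=
  TensorProduct.lid k (Module.End k M)
    (TensorProduct.map ω LinearMap.id ((e2 M).symm Φ.toLinearMap))

/-- `ρ(ω) = (id ⊗ ω)(Φ)`, where `Φ` is regarded as an element of `End(M) ⊗ End(M)`. -/
noncomputable def rho (ω : Module.Dual k (Module.End k M)) : Module.End k M :=
  TensorProduct.rid k (Module.End k M)
    (TensorProduct.map LinearMap.id ω ((e2 M).symm Φ.toLinearMap))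

/-- The comultiplication `Δ_l(x) = Φ ∘ (x ⊗ id_M) ∘ Φ⁻¹`, as a linear map
`End(M) → End(M ⊗ M)`. -/
noncomputable def deltaL : Module.End k M →ₗ[k] Module.End k (M ⊗[k] M) :=
  (LinearEquiv.conj Φ).toLinearMap ∘ₗ
    LinearMap.rTensorHom (R := k) (N := M) (P := M) M

/-- The comultiplication `Δ_r(x) = Φ⁻¹ ∘ (id_M ⊗ x) ∘ Φ`, as a linear map
`End(M) → End(M ⊗ M)`. -/
noncomputable def deltaR : Module.End k M →ₗ[k] Module.End k (M ⊗[k] M) :=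
  (LinearEquiv.conj Φ.symm).toLinearMap ∘ₗ
    LinearMap.lTensorHom (R := k) (N := M) (P := M) M

/-- The product `ω *_r ω' = (ω ⊗ ω') ∘ Δ_r` on `End(M)*`. -/
noncomputable def dualMulR (ω ω' : Module.Dual k (Module.End k M)) :
    Module.Dual k (Module.End k M) :=
  (TensorProduct.lid k k).toLinearMap ∘ₗ TensorProduct.map ω ω' ∘ₗ
    (e2 M).symm.toLinearMap ∘ₗ deltaR Φ

/-- The product `ω *_l ω' = (ω ⊗ ω') ∘ Δ_l` on `End(M)*`. -/
noncomputable def dualMulL (ω ω' : Module.Dual k (Module.End k M)) :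
    Module.Dual k (Module.End k M) :=
  (TensorProduct.lid k k).toLinearMap ∘ₗ TensorProduct.map ω ω' ∘ₗ
    (e2 M).symm.toLinearMap ∘ₗ deltaL Φ

end PentagonEnd

/-!
Write `A = End(M)` and let `u ∈ A ⊗ A` be `Φ`, an invertible element satisfying
`u₁₂ u₁₃ u₂₃ = u₂₃ u₁₂`. The antipode identities hold for any invertible `u`: multiplying the last
two factors of `x₁₂ y₁₃` gives `x y`. For the well-definedness, slice `u₁₂ u₁₃ = u₂₃ u₁₂ u₂₃⁻¹`
with `χ ⊗ η` in the last two factors: the span `W` of the left legs `(id ⊗ χ)(u)` is closed under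
multiplication, so `W ⊗ A` is stable under left multiplication by `u`. By finite dimensionality it
is then stable under `u⁻¹`, so it contains `u⁻¹ u = 1` and hence `u⁻¹`. If `(ω ⊗ id)(u) = 0`, then
`ω` vanishes on `W`, so `(ω ⊗ id)(u⁻¹) = 0`.
-/

section Legs

variable {R A N P : Type*} [CommSemiring R] [Semiring A] [Algebra R A]
  [AddCommMonoid N] [Module R N] [AddCommMonoid P] [Module R P]

open Algebra.TensorProduct

def leg12 : A ⊗[R] A →ₐ[R] A ⊗[R] (A ⊗[R] A) := map (AlgHom.id R A) includeLeft

def leg13 : A ⊗[R] A →ₐ[R] A ⊗[R] (A ⊗[R] A) := map (AlgHom.id R A) includeRight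

def leg23 : A ⊗[R] A →ₐ[R] A ⊗[R] (A ⊗[R] A) := includeRight

def SatisfiesPentagon (u : A ⊗[R] A) : Prop :=
  leg12 u * leg13 u * leg23 u = leg23 u * leg12 u

@[simp] lemma leg12_tmul (a b : A) : leg12 (a ⊗ₜ[R] b) = a ⊗ₜ (b ⊗ₜ 1) := rfl

@[simp] lemma leg13_tmul (a b : A) : leg13 (a ⊗ₜ[R] b) = a ⊗ₜ ((1 : A) ⊗ₜ b) := rfl

@[simp] lemma leg23_apply (x : A ⊗[R] A) : leg23 x = (1 : A) ⊗ₜ x := rfl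

lemma lTensor_mul'_leg12_mul_leg13 (x y : A ⊗[R] A) :
    (LinearMap.mul' R A).lTensor A (leg12 x * leg13 y) = x * y := by
  induction x using TensorProduct.induction_on with
  | zero => simp
  | add x x' hx hx' => simp only [map_add, add_mul, hx, hx']
  | tmul a b =>
    induction y using TensorProduct.induction_on with
    | zero => simp
    | add y y' hy hy' => simp only [map_add, mul_add, hy, hy']
    | tmul c d => simp

def sliceLeft (ω : Module.Dual R A) : A ⊗[R] N →ₗ[R] N :=
  (TensorProduct.lid R N).toLinearMap ∘ₗ TensorProduct.map ω LinearMap.id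

def sliceRight (ψ : Module.Dual R N) : A ⊗[R] N →ₗ[R] A :=
  (TensorProduct.rid R A).toLinearMap ∘ₗ TensorProduct.map LinearMap.id ψ

@[simp] lemma sliceLeft_tmul (ω : Module.Dual R A) (a : A) (n : N) :
    sliceLeft ω (a ⊗ₜ n) = ω a • n := by
  simp [sliceLeft]

@[simp] lemma sliceRight_tmul (ψ : Module.Dual R N) (a : A) (n : N) :
    sliceRight ψ (a ⊗ₜ n) = ψ n • a := by
  simp [sliceRight]

lemma sliceLeft_lTensor (ω : Module.Dual R A) (f : N →ₗ[R] P) (x : A ⊗[R] N) :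
    sliceLeft ω (f.lTensor A x) = f (sliceLeft ω x) := by
  induction x using TensorProduct.induction_on with
  | zero => simp
  | add x x' hx hx' => simp only [map_add, hx, hx']
  | tmul a n => simp

lemma apply_sliceRight (ω : Module.Dual R A) (ψ : Module.Dual R N) (x : A ⊗[R] N) :
    ω (sliceRight ψ x) = ψ (sliceLeft ω x) := by
  induction x using TensorProduct.induction_on with
  | zero => simp
  | add x x' hx hx' => simp only [map_add, hx, hx']
  | tmul a n => simp [mul_comm]

lemma sliceRight_leg12 (ψ : Module.Dual R (A ⊗[R] A)) (x : A ⊗[R] A) :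
    sliceRight ψ (leg12 x) = sliceRight (ψ ∘ₗ (TensorProduct.mk R A A).flip 1) x := by
  induction x using TensorProduct.induction_on with
  | zero => simp
  | add x x' hx hx' => simp only [map_add, hx, hx']
  | tmul a b => simp

lemma sliceRight_leg23_mul_mul_leg23 (ψ : Module.Dual R (A ⊗[R] A)) (y z : A ⊗[R] A)
    (X : A ⊗[R] (A ⊗[R] A)) :
    sliceRight ψ (leg23 y * X * leg23 z) =
      sliceRight (ψ ∘ₗ LinearMap.mulLeft R y ∘ₗ LinearMap.mulRight R z) X := by
  induction X using TensorProduct.induction_on with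
  | zero => simp
  | add X X' hX hX' => simp only [mul_add, add_mul, map_add, hX, hX']
  | tmul a n => simp [mul_assoc]

lemma sliceRight_dualDistrib_leg12_mul_leg13 (χ η : Module.Dual R A) (x y : A ⊗[R] A) :
    sliceRight (TensorProduct.dualDistrib R A A (χ ⊗ₜ η)) (leg12 x * leg13 y) =
      sliceRight χ x * sliceRight η y := by
  induction x using TensorProduct.induction_on with
  | zero => simp
  | add x x' hx hx' => simp only [map_add, add_mul, hx, hx']
  | tmul a b =>
    induction y using TensorProduct.induction_on with
    | zero => simp
    | add y y' hy hy' => simp only [map_add, mul_add, hy, hy']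
    | tmul c d => simp [smul_smul, mul_comm]

lemma mul'_sliceLeft_leg12_mul_leg13 {x y : A ⊗[R] A} (hxy : x * y = 1) (ω : Module.Dual R A) :
    LinearMap.mul' R A (sliceLeft ω (leg12 x * leg13 y)) = ω 1 • 1 := by
  rw [← sliceLeft_lTensor, lTensor_mul'_leg12_mul_leg13, hxy, Algebra.TensorProduct.one_def,
    sliceLeft_tmul]

end Legs

section TensorTop

variable {A : Type*} [Ring A] [Algebra k A]

namespace Submodule

/-- The image of `W ⊗ A` in `A ⊗ A`. -/
def tensorTop (W : Submodule k A) : Submodule k (A ⊗[k] A) :=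
  map₂ (TensorProduct.mk k A A) W ⊤

variable {W : Submodule k A}

lemma tmul_mem_tensorTop {w : A} (hw : w ∈ W) (a : A) : w ⊗ₜ a ∈ W.tensorTop :=
  apply_mem_map₂ _ hw mem_top

lemma mul_mem_tensorTop {W' W'' : Submodule k A} (h : W * W' ≤ W'') {x y : A ⊗[k] A}
    (hx : x ∈ W.tensorTop) (hy : y ∈ W'.tensorTop) : x * y ∈ W''.tensorTop := by
  suffices W.tensorTop ≤ W''.tensorTop.comap (LinearMap.mulRight k y) from this hx
  refine map₂_le.2 fun w hw a _ => ?_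
  suffices W'.tensorTop ≤ W''.tensorTop.comap (LinearMap.mulLeft k (w ⊗ₜ a)) from this hy
  refine map₂_le.2 fun w' hw' b _ => ?_
  simpa using tmul_mem_tensorTop (h (mul_mem_mul hw hw')) (a * b)

lemma sliceLeft_eq_zero_of_mem_tensorTop {x : A ⊗[k] A} (hx : x ∈ W.tensorTop)
    {ω : Module.Dual k A} (hω : W ≤ LinearMap.ker ω) : sliceLeft ω x = 0 := by
  suffices W.tensorTop ≤ LinearMap.ker (sliceLeft ω) from this hx
  exact map₂_le.2 fun w hw a _ => by simp [LinearMap.mem_ker.1 (hω hw)]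

lemma mem_tensorTop_of_forall_sliceRight_mem {x : A ⊗[k] A}
    (h : ∀ χ : Module.Dual k A, sliceRight χ x ∈ W) : x ∈ W.tensorTop := by
  classical
  -- `x = ∑ᵢ (id ⊗ bᵢ*)(x) ⊗ bᵢ` for a basis `b` of the right factor
  let b := Module.Basis.ofVectorSpace k A
  let e := TensorProduct.equivFinsuppOfBasisRight (M := A) b
  have he : ∀ i, (Finsupp.lapply i).comp e.toLinearMap = sliceRight (b.coord i) :=
    fun i => TensorProduct.ext' fun a c => by simp [e]
  rw [← e.symm_apply_apply x, TensorProduct.equivFinsuppOfBasisRight_symm_apply]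
  refine sum_mem fun i _ => tmul_mem_tensorTop ?_ _
  simpa using congr($(he i) x) ▸ h (b.coord i)

end Submodule

lemma Submodule.inv_mul_mem_of_forall_mul_mem [FiniteDimensional k A] {S : Submodule k A}
    (u : Aˣ) (hS : ∀ x ∈ S, ↑u * x ∈ S) {x : A} (hx : x ∈ S) : ↑u⁻¹ * x ∈ S := by
  let e : A ≃ₗ[k] A := DistribMulAction.toLinearEquiv k A u
  have hle : S.map (e : A →ₗ[k] A) ≤ S := map_le_iff_le_comap.2 hS
  obtain ⟨y, hy, rfl⟩ := (eq_of_le_of_finrank_eq hle (e.finrank_map_eq S)).symm ▸ hx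
  simpa [e, Units.smul_def] using hy

end TensorTop

section Pentagon

variable {A : Type*} [Ring A] [Algebra k A]

def leftLegs (u : A ⊗[k] A) : Submodule k A :=
  Submodule.span k (Set.range fun χ : Module.Dual k A => sliceRight χ u)

lemma mem_tensorTop_leftLegs (u : A ⊗[k] A) : u ∈ (leftLegs u).tensorTop :=
  Submodule.mem_tensorTop_of_forall_sliceRight_mem fun χ => Submodule.subset_span ⟨χ, rfl⟩

lemma leftLegs_le_ker {u : A ⊗[k] A} {ω : Module.Dual k A} (hω : sliceLeft ω u = 0) :
    leftLegs u ≤ LinearMap.ker ω :=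
  Submodule.span_le.2 <| by
    rintro _ ⟨χ, rfl⟩
    simp [apply_sliceRight, hω]

variable (u : (A ⊗[k] A)ˣ)

lemma leftLegs_mul_le_of_pentagon (hu : SatisfiesPentagon (u : A ⊗[k] A)) :
    leftLegs (u : A ⊗[k] A) * leftLegs ↑u ≤ leftLegs ↑u := by
  rw [leftLegs, Submodule.span_mul_span, Submodule.span_le]
  rintro _ ⟨_, ⟨χ, rfl⟩, _, ⟨η, rfl⟩, rfl⟩
  have hu' : leg12 (u : A ⊗[k] A) * leg13 ↑u = leg23 ↑u * leg12 ↑u * leg23 ↑u⁻¹ := by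
    rw [← hu, mul_assoc, ← map_mul, Units.mul_inv, map_one, mul_one]
  dsimp only
  rw [← sliceRight_dualDistrib_leg12_mul_leg13, hu', sliceRight_leg23_mul_mul_leg23,
    sliceRight_leg12]
  exact Submodule.subset_span ⟨_, rfl⟩

theorem sliceLeft_inv_eq_zero_of_pentagon [FiniteDimensional k A]
    (hu : SatisfiesPentagon (u : A ⊗[k] A)) {ω : Module.Dual k A}
    (hω : sliceLeft ω (u : A ⊗[k] A) = 0) : sliceLeft ω (↑u⁻¹ : A ⊗[k] A) = 0 := by
  set T := (leftLegs (u : A ⊗[k] A)).tensorTop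
  have hmem : (u : A ⊗[k] A) ∈ T := mem_tensorTop_leftLegs _
  have hmul : ∀ x ∈ T, ↑u * x ∈ T := fun x hx =>
    Submodule.mul_mem_tensorTop (leftLegs_mul_le_of_pentagon u hu) hmem hx
  have hone : (1 : A ⊗[k] A) ∈ T := by
    simpa using Submodule.inv_mul_mem_of_forall_mul_mem u hmul hmem
  have hinv : (↑u⁻¹ : A ⊗[k] A) ∈ T := by
    simpa using Submodule.inv_mul_mem_of_forall_mul_mem u hmul hone
  exact Submodule.sliceLeft_eq_zero_of_mem_tensorTop hinv (leftLegs_le_ker hω)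

end Pentagon

section EndTensor

variable {M : Type*} [AddCommGroup M] [Module k M] [FiniteDimensional k M]

lemma e2_tmul (f g : Module.End k M) : e2 M (f ⊗ₜ g) = TensorProduct.map f g := by
  simp [e2, homTensorHomEquiv_apply]

lemma e3_tmul (f : Module.End k M) (y : Module.End k M ⊗[k] Module.End k M) :
    e3 M (f ⊗ₜ y) = TensorProduct.map f (e2 M y) := by
  simp [e3, homTensorHomEquiv_apply]

lemma e2_eq_endTensorEndAlgHom (x : Module.End k M ⊗[k] Module.End k M) :
    e2 M x = Module.endTensorEndAlgHom (R := k) (S := k) (A := k) x := by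
  induction x using TensorProduct.induction_on with
  | zero => simp
  | add x x' hx hx' => simp only [map_add, hx, hx']
  | tmul f g => rw [e2_tmul]; rfl

def e2AlgEquiv (M : Type*) [AddCommGroup M] [Module k M] [FiniteDimensional k M] :
    Module.End k M ⊗[k] Module.End k M ≃ₐ[k] Module.End k (M ⊗[k] M) :=
  AlgEquiv.ofLinearEquiv (e2 M) (by simp [e2_eq_endTensorEndAlgHom])
    (by simp [e2_eq_endTensorEndAlgHom])

lemma e3_eq_endTensorEndAlgHom (X : Module.End k M ⊗[k] (Module.End k M ⊗[k] Module.End k M)) :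
    e3 M X = Module.endTensorEndAlgHom (R := k) (S := k) (A := k)
      (Algebra.TensorProduct.map (AlgHom.id k _) (e2AlgEquiv M).toAlgHom X) := by
  induction X using TensorProduct.induction_on with
  | zero => simp
  | add X X' hX hX' => simp only [map_add, hX, hX']
  | tmul f y => rw [e3_tmul]; rfl

lemma e3_mul (X Y : Module.End k M ⊗[k] (Module.End k M ⊗[k] Module.End k M)) :
    e3 M (X * Y) = e3 M X ∘ₗ e3 M Y := by
  simp only [e3_eq_endTensorEndAlgHom, map_mul, Module.End.mul_eq_comp]

lemma e3_leg12 (x : Module.End k M ⊗[k] Module.End k M) : e3 M (leg12 x) = m12 (e2 M x) := by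
  induction x using TensorProduct.induction_on with
  | zero => ext; simp [m12]
  | add x x' hx hx' => rw [map_add, map_add, hx, hx']; ext; simp [m12]
  | tmul f g => ext; simp [m12, e3_tmul, e2_tmul, Module.End.one_eq_id]

lemma e3_leg13 (x : Module.End k M ⊗[k] Module.End k M) : e3 M (leg13 x) = m13 (e2 M x) := by
  induction x using TensorProduct.induction_on with
  | zero => ext; simp [m13]
  | add x x' hx hx' => rw [map_add, map_add, hx, hx']; ext; simp [m13]
  | tmul f g => ext; simp [m13, e3_tmul, e2_tmul, Module.End.one_eq_id]

lemma e3_leg23 (x : Module.End k M ⊗[k] Module.End k M) : e3 M (leg23 x) = m23 (e2 M x) := by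
  rw [leg23_apply, e3_tmul, Module.End.one_eq_id, m23]
  rfl

end EndTensor

/-- Let `Φ` be a solution of the pentagon equation on a finite-dimensional `M`.
(a) The assignment `S(λ(ω)) = (ω ⊗ id)(Φ⁻¹)` is well defined on the image of `λ`;
(b) the two antipode identities hold:
`c((ω ⊗ id ⊗ id)(Φ₁₂ ∘ Φ₁₃⁻¹)) = ω(id) • id = c((ω ⊗ id ⊗ id)(Φ₁₂⁻¹ ∘ Φ₁₃))`,
where `c` is the composition `End(M) ⊗ End(M) → End(M)`. -/
theorem stmt16 {M : Type} [AddCommGroup M] [Module k M] [FiniteDimensional k M]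
    (Φ : M ⊗[k] M ≃ₗ[k] M ⊗[k] M) (hPE : PE Φ.toLinearMap) :
    (∀ ω : Module.Dual k (Module.End k M), lam Φ ω = 0 →
      TensorProduct.lid k (Module.End k M)
        (TensorProduct.map ω LinearMap.id ((e2 M).symm Φ.symm.toLinearMap)) = 0) ∧
    (∀ ω : Module.Dual k (Module.End k M),
      LinearMap.mul' k (Module.End k M)
        (TensorProduct.lid k ((Module.End k M) ⊗[k] (Module.End k M))
          (TensorProduct.map ω LinearMap.id
            ((e3 M).symm (m12 Φ.toLinearMap ∘ₗ m13 Φ.symm.toLinearMap)))) =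
        ω LinearMap.id • LinearMap.id) ∧
    (∀ ω : Module.Dual k (Module.End k M),
      LinearMap.mul' k (Module.End k M)
        (TensorProduct.lid k ((Module.End k M) ⊗[k] (Module.End k M))
          (TensorProduct.map ω LinearMap.id
            ((e3 M).symm (m12 Φ.symm.toLinearMap ∘ₗ m13 Φ.toLinearMap)))) =
        ω LinearMap.id • LinearMap.id) := by
  let u := Units.map (e2AlgEquiv M).symm.toMonoidHom
    ((LinearMap.GeneralLinearGroup.generalLinearEquiv k (M ⊗[k] M)).symm Φ)
  have hu : (u : Module.End k M ⊗[k] Module.End k M) = (e2 M).symm Φ.toLinearMap := rfl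
  have hu_inv : (↑u⁻¹ : Module.End k M ⊗[k] Module.End k M) = (e2 M).symm Φ.symm.toLinearMap :=
    rfl
  have hpent : SatisfiesPentagon (u : Module.End k M ⊗[k] Module.End k M) :=
    (e3 M).injective <| by
      rw [e3_mul, e3_mul, e3_mul, e3_leg12, e3_leg13, e3_leg23, hu,
        LinearEquiv.apply_symm_apply, LinearMap.comp_assoc]
      exact hPE
  have hslice (x y : Module.End k M ⊗[k] Module.End k M) :
      (e3 M).symm (m12 (e2 M x) ∘ₗ m13 (e2 M y)) = leg12 x * leg13 y := by
    rw [LinearEquiv.symm_apply_eq, e3_mul, e3_leg12, e3_leg13]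
  refine ⟨fun ω hω => sliceLeft_inv_eq_zero_of_pentagon u hpent hω, fun ω => ?_, fun ω => ?_⟩
  · have h := mul'_sliceLeft_leg12_mul_leg13 u.mul_inv ω
    rwa [← hslice, hu, hu_inv, LinearEquiv.apply_symm_apply, LinearEquiv.apply_symm_apply] at h
  · have h := mul'_sliceLeft_leg12_mul_leg13 u.inv_mul ω
    rwa [← hslice, hu, hu_inv, LinearEquiv.apply_symm_apply, LinearEquiv.apply_symm_apply] at h
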